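/- Let 1 ≤ m ≤ n be integers, let h_1 be a C2-admissible numerical function with parameter s_1 = m, and define h_2(ℓ) = h_{m,n}(ℓ) - h_1(m+n-2-ℓ). Suppose h_2 is C2-admissible with parameter s_2 < m. Then h_1(n-1) > 0; in particular, b_1 := sup{ℓ : h_1(ℓ) > 0} satisfies n ≤ b_1 + 1, and hence b_2 := sup{ℓ : h_2(ℓ) > 0} satisfies b_2 < b_1. -/

import Mathlib

def C2Admissible (h : ℤ → ℤ) (s : ℤ) : Prop :=
  1 ≤ s ∧ (∀ n < 0, h n = 0) ∧ (∀ n, 0 ≤ n → n ≤ s - 1 → h n = n + 1) ∧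
  (∀ n, s - 1 ≤ n → h (n + 1) ≤ h n) ∧ (∃ N, ∀ n ≥ N, h n = 0)

def DecreasingType (h : ℤ → ℤ) : Prop :=
  ∀ a, h (a + 1) < h a → ∀ n, a ≤ n → h (n + 1) < h n ∨ h n = 0

noncomputable def genus (h : ℤ → ℤ) : ℤ :=
  ∑ᶠ n : ℤ, if 2 ≤ n then (n - 1) * h n else 0

def hCI (m n ℓ : ℤ) : ℤ :=
  if 0 ≤ ℓ ∧ ℓ ≤ m - 1 then ℓ + 1
  else if m - 1 ≤ ℓ ∧ ℓ ≤ n - 1 then m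
  else if n - 1 ≤ ℓ ∧ ℓ ≤ m + n - 1 then m + n - 1 - ℓ
  else 0

/-!
Evaluating the linkage at `ℓ = m - 1`, where `h_{m,n}` takes its maximal value `m`, gives
`h₂ (m - 1) = m - h₁ (n - 1)`. Since `h₂` is non-increasing from `s₂ - 1` on, this is at most
`h₂ (s₂ - 1) = s₂ < m`, so `h₁ (n - 1) > 0` and `b₁ ≥ n - 1`. On the other side, for `ℓ ≥ n - 1`
the argument `m + n - 2 - ℓ` of `h₁` lies in the initial segment where `h₁` agrees with `h_{m,n}`
reflected, so `h₂` vanishes there and `b₂ ≤ n - 2`.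
-/

namespace C2Admissible

variable {h : ℤ → ℤ} {s : ℤ}

theorem antitoneOn (hh : C2Admissible h s) : AntitoneOn h (Set.Ici (s - 1)) :=
  antitoneOn_of_add_one_le Set.ordConnected_Ici fun a _ ha _ => hh.2.2.2.1 a ha

theorem apply_of_le_sub_one (hh : C2Admissible h s) {ℓ : ℤ} (hℓ : ℓ ≤ s - 1) :
    h ℓ = max (ℓ + 1) 0 := by
  obtain ⟨-, hneg, hinit, -⟩ := hh
  rcases lt_or_ge ℓ 0 with hℓ0 | hℓ0
  · rw [hneg ℓ hℓ0]; omega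
  · rw [hinit ℓ hℓ0 hℓ]; omega

theorem apply_sub_one (hh : C2Admissible h s) : h (s - 1) = s := by
  rw [hh.apply_of_le_sub_one le_rfl]; have := hh.1; omega

theorem apply_le_of_sub_one_le (hh : C2Admissible h s) {ℓ : ℤ} (hℓ : s - 1 ≤ ℓ) : h ℓ ≤ s :=
  hh.apply_sub_one ▸ hh.antitoneOn Set.self_mem_Ici hℓ hℓ

theorem bddAbove_pos (hh : C2Admissible h s) : BddAbove {ℓ | 0 < h ℓ} := by
  obtain ⟨N, hN⟩ := hh.2.2.2.2
  refine ⟨N, fun ℓ hℓ => le_of_not_gt fun hNℓ => ?_⟩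
  exact (ne_of_gt hℓ) (hN ℓ hNℓ.le)

theorem nonempty_pos (hh : C2Admissible h s) : {ℓ | 0 < h ℓ}.Nonempty :=
  ⟨0, show 0 < h 0 by rw [hh.apply_of_le_sub_one (by linarith [hh.1])]; norm_num⟩

theorem le_csSup_pos (hh : C2Admissible h s) {ℓ : ℤ} (hℓ : 0 < h ℓ) :
    ℓ ≤ sSup {ℓ | 0 < h ℓ} :=
  le_csSup hh.bddAbove_pos hℓ

theorem csSup_pos_le (hh : C2Admissible h s) {b : ℤ} (hb : ∀ ℓ, b < ℓ → h ℓ = 0) :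
    sSup {ℓ | 0 < h ℓ} ≤ b :=
  csSup_le hh.nonempty_pos fun ℓ hℓ => le_of_not_gt fun hbℓ => (ne_of_gt hℓ) (hb ℓ hbℓ)

end C2Admissible

theorem hCI_sub_one_left {m : ℤ} (n : ℤ) (hm : 1 ≤ m) : hCI m n (m - 1) = m := by
  unfold hCI; split_ifs <;> omega

theorem hCI_of_sub_one_le {m n ℓ : ℤ} (hm : 0 ≤ m) (hmn : m ≤ n) (hℓ : n - 1 ≤ ℓ) :
    hCI m n ℓ = max (m + n - 1 - ℓ) 0 := by
  unfold hCI; split_ifs <;> omega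

section Linked

variable {m n : ℤ} {h₁ h₂ : ℤ → ℤ}

theorem linked_apply_sub_one (hh₁ : C2Admissible h₁ m)
    (hdef : ∀ ℓ, h₂ ℓ = hCI m n ℓ - h₁ (m + n - 2 - ℓ)) : h₂ (m - 1) = m - h₁ (n - 1) := by
  rw [hdef, hCI_sub_one_left n hh₁.1, show m + n - 2 - (m - 1) = n - 1 by ring]

theorem linked_eq_zero_of_sub_one_le (hmn : m ≤ n) (hh₁ : C2Admissible h₁ m)
    (hdef : ∀ ℓ, h₂ ℓ = hCI m n ℓ - h₁ (m + n - 2 - ℓ)) {ℓ : ℤ} (hℓ : n - 1 ≤ ℓ) :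
    h₂ ℓ = 0 := by
  have hm := hh₁.1
  rw [hdef, hCI_of_sub_one_le (by omega) hmn hℓ, hh₁.apply_of_le_sub_one (by omega)]
  omega

end Linked

theorem linked_b2_lt_b1_general (m n s₂ : ℤ) (hmn : m ≤ n)
    (h₁ h₂ : ℤ → ℤ) (hh₁ : C2Admissible h₁ m)
    (hdef : ∀ ℓ, h₂ ℓ = hCI m n ℓ - h₁ (m + n - 2 - ℓ))
    (hh₂ : C2Admissible h₂ s₂) (hs₂ : s₂ < m) :
    0 < h₁ (n - 1) ∧ n ≤ sSup {ℓ : ℤ | 0 < h₁ ℓ} + 1 ∧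
      sSup {ℓ : ℤ | 0 < h₂ ℓ} < sSup {ℓ : ℤ | 0 < h₁ ℓ} := by
  have hpos : 0 < h₁ (n - 1) := by
    have := hh₂.apply_le_of_sub_one_le (show s₂ - 1 ≤ m - 1 by omega)
    rw [linked_apply_sub_one hh₁ hdef] at this
    omega
  have hb₁ : n - 1 ≤ sSup {ℓ : ℤ | 0 < h₁ ℓ} := hh₁.le_csSup_pos hpos
  have hb₂ : sSup {ℓ : ℤ | 0 < h₂ ℓ} ≤ n - 2 :=
    hh₂.csSup_pos_le fun ℓ hℓ => linked_eq_zero_of_sub_one_le hmn hh₁ hdef (by omega)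
  exact ⟨hpos, by omega, by omega⟩

theorem linked_b2_lt_b1 (m n s₂ : ℤ) (hm : 1 ≤ m) (hmn : m ≤ n)
    (h₁ h₂ : ℤ → ℤ) (hh₁ : C2Admissible h₁ m)
    (hdef : ∀ ℓ, h₂ ℓ = hCI m n ℓ - h₁ (m + n - 2 - ℓ))
    (hh₂ : C2Admissible h₂ s₂) (hs₂ : s₂ < m) :
    0 < h₁ (n - 1) ∧ n ≤ sSup {ℓ : ℤ | 0 < h₁ ℓ} + 1 ∧
      sSup {ℓ : ℤ | 0 < h₂ ℓ} < sSup {ℓ : ℤ | 0 < h₁ ℓ} :=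
  linked_b2_lt_b1_general m n s₂ hmn h₁ h₂ hh₁ hdef hh₂ hs₂
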